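/- arXiv:hep-th/0112263 — 2 statements merged into one kernel-verified Lean document; each statement's English description precedes it below -/
import Mathlib

section
/- Let K be a field, let V be a K-vector space of finite dimension n, and let ω be a nonzero alternating n-linear form on V. For every p with 0 ≤ p ≤ n, the linear map Φ_p from the (n−p)-th exterior power ⋀^{n−p} V to the space of alternating p-linear forms on V, determined on decomposable elements by Φ_p(v₁ ∧ … ∧ v_{n−p})(w₁, …, w_p) = ω(v₁, …, v_{n−p}, w₁, …, w_p), is a linear isomorphism. -/
/-! STATEMENT 2: Contraction with a nonzero volume form `ω` on an `n`-dimensional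
space `V` gives a linear isomorphism `⋀^{n−p} V ≃ Alt^p(V; K)`. -/

/-- The decomposable element `v₁ ∧ … ∧ v_k` of the `k`-th exterior power `⋀[K]^k V`. -/
noncomputable def wedgeOfFamily (K : Type*) {V : Type*} [Field K] [AddCommGroup V] [Module K V]
    (k : ℕ) (v : Fin k → V) : ⋀[K]^k V :=
  ⟨ExteriorAlgebra.ιMulti K k v, ExteriorAlgebra.ιMulti_range K k (Set.mem_range_self v)⟩

namespace CVF

variable {K V : Type*} [Field K] [AddCommGroup V] [Module K V]

theorem append_update_right {α : Type*} {m p : ℕ} [DecidableEq (Fin p)]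
    [DecidableEq (Fin (m+p))] (v : Fin m → α) (w : Fin p → α) (j : Fin p) (x : α) :
    Fin.append v (Function.update w j x) = Function.update (Fin.append v w) (Fin.natAdd m j) x := by
  funext i
  refine Fin.addCases (fun k => ?_) (fun k => ?_) i
  · rw [Fin.append_left, Function.update_of_ne, Fin.append_left]
    intro hc
    have := congrArg Fin.val hc
    simp only [Fin.coe_castAdd, Fin.coe_natAdd] at this
    omega
  · rcases eq_or_ne k j with rfl | hk
    · rw [Fin.append_right, Function.update_self, Function.update_self]
    · rw [Fin.append_right, Function.update_of_ne hk, Function.update_of_ne, Fin.append_right]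
      intro hc
      apply hk
      have := congrArg Fin.val hc
      simp only [Fin.coe_natAdd] at this
      exact Fin.ext (by omega)

theorem append_update_left {α : Type*} {m p : ℕ} [DecidableEq (Fin m)]
    [DecidableEq (Fin (m+p))] (v : Fin m → α) (w : Fin p → α) (j : Fin m) (x : α) :
    Fin.append (Function.update v j x) w = Function.update (Fin.append v w) (Fin.castAdd p j) x := by
  funext i
  refine Fin.addCases (fun k => ?_) (fun k => ?_) i
  · rcases eq_or_ne k j with rfl | hk
    · rw [Fin.append_left, Function.update_self, Function.update_self]
    · rw [Fin.append_left, Function.update_of_ne hk, Function.update_of_ne, Fin.append_left]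
      intro hc
      apply hk
      have := congrArg Fin.val hc
      simp only [Fin.coe_castAdd] at this
      exact Fin.ext this
  · rw [Fin.append_right, Function.update_of_ne, Fin.append_right]
    intro hc
    have := congrArg Fin.val hc
    simp only [Fin.coe_castAdd, Fin.coe_natAdd] at this
    omega

theorem comp_cast_update {α : Type*} {m n : ℕ} [DecidableEq (Fin m)] [DecidableEq (Fin n)]
    (h : m = n) (g : Fin m → α) (a : Fin m) (x : α) :
    (Function.update g a x) ∘ Fin.cast h.symm
      = Function.update (g ∘ Fin.cast h.symm) (Fin.cast h a) x := by
  have := Function.update_comp_eq_of_injective g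
    (f := Fin.cast h.symm) (fun x y hxy => by
      have := congrArg Fin.val hxy; exact Fin.ext this) (Fin.cast h a) x
  simpa using this

variable {n m p : ℕ}

/-- The inner alternating form `w ↦ ω(v, w)`. -/
noncomputable def innerForm (ω : V [⋀^Fin n]→ₗ[K] K) (h : m + p = n) (v : Fin m → V) :
    V [⋀^Fin p]→ₗ[K] K where
  toFun w := ω (Fin.append v w ∘ Fin.cast h.symm)
  map_update_add' w j x y := by
    simp only [append_update_right, comp_cast_update h]
    exact ω.map_update_add _ _ _ _
  map_update_smul' w j c x := by
    simp only [append_update_right, comp_cast_update h]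
    exact ω.map_update_smul _ _ _ _
  map_eq_zero_of_eq' w i j hw hij := by
    apply ω.map_eq_zero_of_eq (i := Fin.cast h (Fin.natAdd m i)) (j := Fin.cast h (Fin.natAdd m j))
    · show Fin.append v w (Fin.cast h.symm (Fin.cast h _)) =
        Fin.append v w (Fin.cast h.symm (Fin.cast h _))
      rw [show Fin.cast h.symm (Fin.cast h (Fin.natAdd m i)) = Fin.natAdd m i from rfl,
        show Fin.cast h.symm (Fin.cast h (Fin.natAdd m j)) = Fin.natAdd m j from rfl,
        Fin.append_right, Fin.append_right, hw]
    · intro hc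
      apply hij
      have := congrArg Fin.val hc
      simp only [Fin.coe_cast, Fin.coe_natAdd] at this
      exact Fin.ext (by omega)

@[simp] theorem innerForm_apply (ω : V [⋀^Fin n]→ₗ[K] K) (h : m + p = n) (v : Fin m → V)
    (w : Fin p → V) : innerForm ω h v w = ω (Fin.append v w ∘ Fin.cast h.symm) := rfl

/-- The contraction map `v ↦ (w ↦ ω(v, w))` as an alternating map with values in
the space of alternating forms. -/
noncomputable def contractionForm (ω : V [⋀^Fin n]→ₗ[K] K) (h : m + p = n) :
    V [⋀^Fin m]→ₗ[K] (V [⋀^Fin p]→ₗ[K] K) where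
  toFun v := innerForm ω h v
  map_update_add' v i x y := by
    ext w
    simp only [innerForm_apply, AlternatingMap.add_apply, append_update_left, comp_cast_update h]
    exact ω.map_update_add _ _ _ _
  map_update_smul' v i c x := by
    ext w
    simp only [innerForm_apply, AlternatingMap.smul_apply, append_update_left, comp_cast_update h]
    exact ω.map_update_smul _ _ _ _
  map_eq_zero_of_eq' v i j hv hij := by
    ext w
    simp only [innerForm_apply, AlternatingMap.zero_apply]
    apply ω.map_eq_zero_of_eq (i := Fin.cast h (Fin.castAdd p i))
      (j := Fin.cast h (Fin.castAdd p j))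
    · show Fin.append v w (Fin.cast h.symm (Fin.cast h _)) =
        Fin.append v w (Fin.cast h.symm (Fin.cast h _))
      rw [show Fin.cast h.symm (Fin.cast h (Fin.castAdd p i)) = Fin.castAdd p i from rfl,
        show Fin.cast h.symm (Fin.cast h (Fin.castAdd p j)) = Fin.castAdd p j from rfl,
        Fin.append_left, Fin.append_left, hv]
    · intro hc
      apply hij
      have := congrArg Fin.val hc
      simp only [Fin.coe_cast, Fin.coe_castAdd] at this
      exact Fin.ext this

@[simp] theorem contractionForm_apply (ω : V [⋀^Fin n]→ₗ[K] K) (h : m + p = n) (v : Fin m → V)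
    (w : Fin p → V) :
    contractionForm ω h v w = ω (Fin.append v w ∘ Fin.cast h.symm) := rfl

/-- The contraction with `ω` as a linear map on the exterior power. -/
noncomputable def Phi (ω : V [⋀^Fin n]→ₗ[K] K) (h : m + p = n) :
    ⋀[K]^m V →ₗ[K] (V [⋀^Fin p]→ₗ[K] K) :=
  (ExteriorAlgebra.liftAlternating
    (Function.update (fun _ => 0) m (contractionForm ω h))).comp (Submodule.subtype _)

theorem Phi_wedge (ω : V [⋀^Fin n]→ₗ[K] K) (h : m + p = n) (v : Fin m → V) :
    Phi ω h (wedgeOfFamily K m v) = contractionForm ω h v := by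
  simp [Phi, wedgeOfFamily, ExteriorAlgebra.liftAlternating_apply_ιMulti]

/-- Ordered tuple of basis vectors indexed by a finset of given cardinality. -/
noncomputable def ordFam (b : Module.Basis (Fin n) K V) {k : ℕ} (s : Finset (Fin n))
    (hs : s.card = k) : Fin k → V :=
  fun i => b (s.orderIsoOfFin hs i)

theorem ordFam_congr (b : Module.Basis (Fin n) K V) {k : ℕ} {s t : Finset (Fin n)} (e : s = t)
    (hs : s.card = k) (ht : t.card = k) : ordFam b s hs = ordFam b t ht := by
  subst e; rfl

theorem units_smul_ne_zero (u : ℤˣ) {c : K} (hc : c ≠ 0) : u • c ≠ 0 := by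
  rcases Int.units_eq_one_or u with rfl | rfl <;> simp [Units.smul_def, hc]

/-- Every injective tuple of basis indices is an ordered tuple pre-composed with
a permutation. -/
theorem exists_perm (b : Module.Basis (Fin n) K V) {k : ℕ} (r : Fin k → Fin n)
    (hr : Function.Injective r) :
    ∃ (s : Finset (Fin n)) (hs : s.card = k) (σ : Equiv.Perm (Fin k)),
      (fun i => b (r i)) = ordFam b s hs ∘ σ := by
  classical
  set s : Finset (Fin n) := Finset.univ.image r with hsdef
  have hs : s.card = k := by
    rw [hsdef, Finset.card_image_of_injective _ hr, Finset.card_univ, Fintype.card_fin]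
  have hmem : ∀ i, r i ∈ s := fun i => by simp [hsdef]
  set σ0 : Fin k → Fin k := fun i => (s.orderIsoOfFin hs).symm ⟨r i, hmem i⟩ with hσ0
  have hinj : Function.Injective σ0 := by
    intro i j hij
    apply hr
    have := congrArg (fun x => ((s.orderIsoOfFin hs) x : Fin n)) hij
    simpa [hσ0] using this
  refine ⟨s, hs, Equiv.ofBijective σ0 (Finite.injective_iff_bijective.mp hinj), ?_⟩
  funext i
  simp [ordFam, hσ0, Equiv.ofBijective_apply]

theorem wedge_mem_span (b : Module.Basis (Fin n) K V) (k : ℕ) (v : Fin k → V) :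
    ExteriorAlgebra.ιMulti K k v ∈ Submodule.span K (Set.range
      fun s : {s : Finset (Fin n) // s.card = k} =>
        ExteriorAlgebra.ιMulti K k (ordFam b s.1 s.2)) := by
  classical
  have hv : v = fun i => ∑ j, b.repr (v i) j • b j := funext fun i => (b.sum_repr (v i)).symm
  rw [hv]
  have expand : (ExteriorAlgebra.ιMulti K k) (fun i => ∑ j, b.repr (v i) j • b j)
      = ∑ r : Fin k → Fin n, (ExteriorAlgebra.ιMulti K k)
          (fun i => b.repr (v i) (r i) • b (r i)) :=
    (ExteriorAlgebra.ιMulti K k).toMultilinearMap.map_sum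
      (g := fun i j => b.repr (v i) j • b j)
  rw [expand]
  apply Submodule.sum_mem
  intro r _
  have hsmul : (ExteriorAlgebra.ιMulti K k) (fun i => b.repr (v i) (r i) • b (r i))
      = (∏ i, b.repr (v i) (r i)) • (ExteriorAlgebra.ιMulti K k) (fun i => b (r i)) :=
    (ExteriorAlgebra.ιMulti K k).toMultilinearMap.map_smul_univ _ _
  rw [hsmul]
  apply Submodule.smul_mem
  by_cases hr : Function.Injective r
  · obtain ⟨s, hs, σ, hfact⟩ := exists_perm b r hr
    have hmem : ExteriorAlgebra.ιMulti K k (ordFam b s hs) ∈ Submodule.span K (Set.range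
        fun s : {s : Finset (Fin n) // s.card = k} =>
          ExteriorAlgebra.ιMulti K k (ordFam b s.1 s.2)) :=
      Submodule.subset_span ⟨⟨s, hs⟩, rfl⟩
    rw [hfact, AlternatingMap.map_perm]
    rcases Int.units_eq_one_or (Equiv.Perm.sign σ) with hsgn | hsgn <;> rw [hsgn]
    · simpa using hmem
    · simpa using Submodule.neg_mem _ hmem
  · rw [AlternatingMap.map_eq_zero_of_not_injective _ _
      (fun hinj => hr (fun i j hij => hinj (by simp [hij])))]
    exact Submodule.zero_mem _

theorem mem_span_of_val {k : ℕ} {ι : Type*} (f : ι → ⋀[K]^k V) (X : ⋀[K]^k V)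
    (hX : (X : ExteriorAlgebra K V) ∈ Submodule.span K
      (Set.range fun i => (f i : ExteriorAlgebra K V))) :
    X ∈ Submodule.span K (Set.range f) := by
  have h1 : (X : ExteriorAlgebra K V) ∈
      Submodule.map (Submodule.subtype _) (Submodule.span K (Set.range f)) := by
    rw [Submodule.map_span]
    rwa [show (Set.range fun i => (f i : ExteriorAlgebra K V))
      = (Submodule.subtype _) '' Set.range f by rw [← Set.range_comp]; rfl] at hX
  obtain ⟨Y, hY, hYX⟩ := h1
  have : Y = X := Subtype.ext hYX
  rwa [← this]

theorem eval_zero (ω : V [⋀^Fin n]→ₗ[K] K) (h : m + p = n) (b : Module.Basis (Fin n) K V)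
    {s t : Finset (Fin n)} (hs : s.card = m) (ht : t.card = p) (hst : t ≠ sᶜ) :
    ω (Fin.append (ordFam b s hs) (ordFam b t ht) ∘ Fin.cast h.symm) = 0 := by
  classical
  have hinter : (s ∩ t).Nonempty := by
    rw [Finset.nonempty_iff_ne_empty]
    intro hdisj
    apply hst
    have hsub : t ⊆ sᶜ := by
      intro i hi
      rw [Finset.mem_compl]
      intro his
      have : i ∈ s ∩ t := Finset.mem_inter.mpr ⟨his, hi⟩
      rw [hdisj] at this
      exact absurd this (Finset.notMem_empty i)
    have hcard : sᶜ.card ≤ t.card := by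
      rw [Finset.card_compl, hs, ht]
      simp only [Fintype.card_fin]
      omega
    exact Finset.eq_of_subset_of_card_le hsub hcard
  obtain ⟨i, hi⟩ := hinter
  have his : i ∈ s := (Finset.mem_inter.mp hi).1
  have hit : i ∈ t := (Finset.mem_inter.mp hi).2
  apply ω.map_eq_zero_of_eq
    (i := Fin.cast h (Fin.castAdd p ((s.orderIsoOfFin hs).symm ⟨i, his⟩)))
    (j := Fin.cast h (Fin.natAdd m ((t.orderIsoOfFin ht).symm ⟨i, hit⟩)))
  · show Fin.append _ _ (Fin.cast h.symm (Fin.cast h _))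
      = Fin.append _ _ (Fin.cast h.symm (Fin.cast h _))
    rw [show ∀ a : Fin (m + p), Fin.cast h.symm (Fin.cast h a) = a from fun a => rfl,
      show ∀ a : Fin (m + p), Fin.cast h.symm (Fin.cast h a) = a from fun a => rfl,
      Fin.append_left, Fin.append_right]
    simp [ordFam]
  · intro hc
    have := congrArg Fin.val hc
    simp only [Fin.coe_cast, Fin.coe_castAdd, Fin.coe_natAdd] at this
    have hlt := ((s.orderIsoOfFin hs).symm ⟨i, his⟩).isLt
    omega

theorem eval_nonzero (ω : V [⋀^Fin n]→ₗ[K] K) (h : m + p = n) (b : Module.Basis (Fin n) K V)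
    (hωb : ω ⇑b ≠ 0) {s : Finset (Fin n)} (hs : s.card = m) (hsc : sᶜ.card = p) :
    ω (Fin.append (ordFam b s hs) (ordFam b sᶜ hsc) ∘ Fin.cast h.symm) ≠ 0 := by
  classical
  set τ : Fin (m + p) → Fin n :=
    Fin.append (fun k => ((s.orderIsoOfFin hs k : Fin n)))
      (fun k => ((sᶜ.orderIsoOfFin hsc k : Fin n))) with hτ
  have hτinj : Function.Injective τ := by
    intro a a' haa
    induction a using Fin.addCases with
    | left k =>
      induction a' using Fin.addCases with
      | left k' =>
        rw [hτ, Fin.append_left, Fin.append_left] at haa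
        have : k = k' := (s.orderIsoOfFin hs).injective (Subtype.ext haa)
        rw [this]
      | right k' =>
        rw [hτ, Fin.append_left, Fin.append_right] at haa
        exfalso
        have h1 : ((s.orderIsoOfFin hs k : Fin n)) ∈ s := (s.orderIsoOfFin hs k).2
        have h2 : ((s.orderIsoOfFin hs k : Fin n)) ∈ sᶜ := haa ▸ (sᶜ.orderIsoOfFin hsc k').2
        exact (Finset.mem_compl.mp h2) h1
    | right k =>
      induction a' using Fin.addCases with
      | left k' =>
        rw [hτ, Fin.append_right, Fin.append_left] at haa
        exfalso
        have h1 : ((sᶜ.orderIsoOfFin hsc k : Fin n)) ∈ sᶜ := (sᶜ.orderIsoOfFin hsc k).2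
        have h2 : ((sᶜ.orderIsoOfFin hsc k : Fin n)) ∈ s := haa ▸ (s.orderIsoOfFin hs k').2
        exact (Finset.mem_compl.mp h1) h2
      | right k' =>
        rw [hτ, Fin.append_right, Fin.append_right] at haa
        have : k = k' := (sᶜ.orderIsoOfFin hsc).injective (Subtype.ext haa)
        rw [this]
  have hσinj : Function.Injective (τ ∘ Fin.cast h.symm) :=
    hτinj.comp (Fin.cast_injective h.symm)
  set σe : Equiv.Perm (Fin n) :=
    Equiv.ofBijective _ (Finite.injective_iff_bijective.mp hσinj) with hσe
  have hfam : Fin.append (ordFam b s hs) (ordFam b sᶜ hsc) ∘ Fin.cast h.symm = ⇑b ∘ σe := by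
    funext i
    show Fin.append (ordFam b s hs) (ordFam b sᶜ hsc) (Fin.cast h.symm i)
      = b (τ (Fin.cast h.symm i))
    induction (Fin.cast h.symm i) using Fin.addCases with
    | left k => rw [Fin.append_left, hτ, Fin.append_left]; rfl
    | right k => rw [Fin.append_right, hτ, Fin.append_right]; rfl
  rw [hfam, AlternatingMap.map_perm]
  exact units_smul_ne_zero _ hωb

theorem span_wedge_top (k : ℕ) :
    Submodule.span K (Set.range (wedgeOfFamily K k (V := V))) = ⊤ := by
  rw [eq_top_iff]
  rintro X -
  apply mem_span_of_val
  have h1 : (X : ExteriorAlgebra K V) ∈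
      Submodule.span K (Set.range (ExteriorAlgebra.ιMulti K k)) := by
    rw [ExteriorAlgebra.ιMulti_span_fixedDegree]; exact X.2
  exact h1

theorem mem_span_wedgeFam (b : Module.Basis (Fin n) K V) (k : ℕ) (X : ⋀[K]^k V) :
    X ∈ Submodule.span K (Set.range fun s : {s : Finset (Fin n) // s.card = k} =>
      wedgeOfFamily K k (ordFam b s.1 s.2)) := by
  apply mem_span_of_val
  have h1 : (X : ExteriorAlgebra K V) ∈
      Submodule.span K (Set.range (ExteriorAlgebra.ιMulti K k)) := by
    rw [ExteriorAlgebra.ιMulti_span_fixedDegree]; exact X.2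
  refine Submodule.span_le.mpr ?_ h1
  rintro _ ⟨v, rfl⟩
  exact wedge_mem_span b k v

theorem ext_on_ordered (b : Module.Basis (Fin n) K V) {f g : V [⋀^Fin p]→ₗ[K] K}
    (hfg : ∀ (t : Finset (Fin n)) (ht : t.card = p),
      f (ordFam b t ht) = g (ordFam b t ht)) : f = g := by
  apply Module.Basis.ext_alternating b
  intro r hr
  obtain ⟨s, hs, σ, hfact⟩ := exists_perm b r hr
  rw [show (fun i => b (r i)) = ordFam b s hs ∘ σ from hfact,
    AlternatingMap.map_perm, AlternatingMap.map_perm, hfg]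

/-- Evaluation of an alternating form at a fixed tuple, as a linear map. -/
def evalAt (K : Type*) {V : Type*} [Field K] [AddCommGroup V] [Module K V] {p : ℕ}
    (w : Fin p → V) : (V [⋀^Fin p]→ₗ[K] K) →ₗ[K] K where
  toFun f := f w
  map_add' _ _ := rfl
  map_smul' _ _ := rfl

theorem Phi_injective [FiniteDimensional K V] (hdim : Module.finrank K V = n)
    (ω : V [⋀^Fin n]→ₗ[K] K) (hω : ω ≠ 0) (h : m + p = n) :
    Function.Injective (Phi ω h (K := K) (V := V)) := by
  classical
  set b : Module.Basis (Fin n) K V := Module.finBasisOfFinrankEq K V hdim with hb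
  have hωb : ω ⇑b ≠ 0 := by
    intro h0
    apply hω
    have := ω.eq_smul_basis_det b
    rw [h0, zero_smul] at this
    exact this
  rw [← LinearMap.ker_eq_bot]
  rw [LinearMap.ker_eq_bot']
  intro X hX
  obtain ⟨c, hc⟩ := (Submodule.mem_span_range_iff_exists_fun K).mp (mem_span_wedgeFam b m X)
  have hc0 : ∀ t : {s : Finset (Fin n) // s.card = m}, c t = 0 := by
    intro t
    have htc : (t.1ᶜ).card = p := by
      have ht := t.2
      rw [Finset.card_compl, Fintype.card_fin, ht]
      omega
    set L : ⋀[K]^m V →ₗ[K] K := (evalAt K (ordFam b t.1ᶜ htc)).comp (Phi ω h) with hL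
    have h0 : L X = 0 := by rw [hL]; simp [hX]
    rw [← hc, map_sum] at h0
    simp only [map_smul, smul_eq_mul] at h0
    have hsingle : ∑ s : {s : Finset (Fin n) // s.card = m},
        c s * L (wedgeOfFamily K m (ordFam b s.1 s.2))
        = c t * L (wedgeOfFamily K m (ordFam b t.1 t.2)) := by
      apply Finset.sum_eq_single
      · intro s _ hst
        have hz : L (wedgeOfFamily K m (ordFam b s.1 s.2)) = 0 := by
          rw [hL]
          show evalAt K (ordFam b t.1ᶜ htc) (Phi ω h (wedgeOfFamily K m (ordFam b s.1 s.2))) = 0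
          rw [Phi_wedge]
          show ω (Fin.append (ordFam b s.1 s.2) (ordFam b t.1ᶜ htc) ∘ Fin.cast h.symm) = 0
          apply eval_zero ω h b s.2 htc
          intro he
          apply hst
          apply Subtype.ext
          have := congrArg (fun u => uᶜ) he
          simpa using this.symm
        rw [hz, mul_zero]
      · intro hnt
        exact absurd (Finset.mem_univ t) hnt
    rw [hsingle] at h0
    have hnz : L (wedgeOfFamily K m (ordFam b t.1 t.2)) ≠ 0 := by
      rw [hL]
      show evalAt K (ordFam b t.1ᶜ htc) (Phi ω h (wedgeOfFamily K m (ordFam b t.1 t.2))) ≠ 0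
      rw [Phi_wedge]
      exact eval_nonzero ω h b hωb t.2 htc
    exact (mul_eq_zero.mp h0).resolve_right hnz
  rw [← hc]
  simp [hc0]

theorem Phi_surjective [FiniteDimensional K V] (hdim : Module.finrank K V = n)
    (ω : V [⋀^Fin n]→ₗ[K] K) (hω : ω ≠ 0) (h : m + p = n) :
    Function.Surjective (Phi ω h (K := K) (V := V)) := by
  classical
  set b : Module.Basis (Fin n) K V := Module.finBasisOfFinrankEq K V hdim with hb
  have hωb : ω ⇑b ≠ 0 := by
    intro h0
    apply hω
    have := ω.eq_smul_basis_det b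
    rw [h0, zero_smul] at this
    exact this
  intro α
  have hsc : ∀ s : {s : Finset (Fin n) // s.card = m}, (s.1ᶜ).card = p := by
    intro s
    rw [Finset.card_compl, Fintype.card_fin, s.2]
    omega
  set A : {s : Finset (Fin n) // s.card = m} → K := fun s =>
    ω (Fin.append (ordFam b s.1 s.2) (ordFam b s.1ᶜ (hsc s)) ∘ Fin.cast h.symm) with hA
  have hAnz : ∀ s, A s ≠ 0 := fun s => eval_nonzero ω h b hωb s.2 (hsc s)
  set c : {s : Finset (Fin n) // s.card = m} → K := fun s =>
    α (ordFam b s.1ᶜ (hsc s)) / A s with hcdef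
  refine ⟨∑ s : {s : Finset (Fin n) // s.card = m},
    c s • wedgeOfFamily K m (ordFam b s.1 s.2), ?_⟩
  apply ext_on_ordered b
  intro t ht
  have htc : (tᶜ).card = m := by
    rw [Finset.card_compl, Fintype.card_fin, ht]
    omega
  set s₀ : {s : Finset (Fin n) // s.card = m} := ⟨tᶜ, htc⟩ with hs₀
  have hLHS : Phi ω h (∑ s : {s : Finset (Fin n) // s.card = m},
      c s • wedgeOfFamily K m (ordFam b s.1 s.2)) (ordFam b t ht)
      = ∑ s : {s : Finset (Fin n) // s.card = m},
        c s * ω (Fin.append (ordFam b s.1 s.2) (ordFam b t ht) ∘ Fin.cast h.symm) := by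
    rw [show Phi ω h (∑ s : {s : Finset (Fin n) // s.card = m},
        c s • wedgeOfFamily K m (ordFam b s.1 s.2)) (ordFam b t ht)
      = evalAt K (ordFam b t ht) (Phi ω h (∑ s : {s : Finset (Fin n) // s.card = m},
        c s • wedgeOfFamily K m (ordFam b s.1 s.2))) from rfl]
    rw [map_sum, map_sum]
    apply Finset.sum_congr rfl
    intro s _
    simp only [map_smul, smul_eq_mul, Phi_wedge]
    rfl
  rw [hLHS]
  have hsingle : ∑ s : {s : Finset (Fin n) // s.card = m},
      c s * ω (Fin.append (ordFam b s.1 s.2) (ordFam b t ht) ∘ Fin.cast h.symm)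
      = c s₀ * ω (Fin.append (ordFam b s₀.1 s₀.2) (ordFam b t ht) ∘ Fin.cast h.symm) := by
    apply Finset.sum_eq_single
    · intro s _ hst
      rw [eval_zero ω h b s.2 ht, mul_zero]
      intro he
      apply hst
      apply Subtype.ext
      have := congrArg (fun u => uᶜ) he
      simpa [hs₀] using this.symm
    · intro hnt
      exact absurd (Finset.mem_univ s₀) hnt
  rw [hsingle]
  have hfix : ordFam b s₀.1ᶜ (hsc s₀) = ordFam b t ht :=
    ordFam_congr b (by simp [hs₀]) _ _
  rw [hcdef]
  show α (ordFam b s₀.1ᶜ (hsc s₀)) / A s₀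
      * ω (Fin.append (ordFam b s₀.1 s₀.2) (ordFam b t ht) ∘ Fin.cast h.symm) = α (ordFam b t ht)
  rw [show ω (Fin.append (ordFam b s₀.1 s₀.2) (ordFam b t ht) ∘ Fin.cast h.symm) = A s₀ by
    rw [hA]
    show ω _ = ω _
    rw [hfix]]
  rw [div_mul_cancel₀ _ (hAnz s₀), hfix]

end CVF

theorem contraction_with_volume_form_is_isomorphism
    (K V : Type*) [Field K] [AddCommGroup V] [Module K V] [FiniteDimensional K V]
    (n : ℕ) (hdim : Module.finrank K V = n)
    (ω : V [⋀^Fin n]→ₗ[K] K) (hω : ω ≠ 0)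
    (p : ℕ) (hp : p ≤ n) :
    -- there is a linear map Φ_p determined on decomposable elements by contraction with ω …
    (∃ Φ : ⋀[K]^(n - p) V →ₗ[K] (V [⋀^Fin p]→ₗ[K] K),
      ∀ (v : Fin (n - p) → V) (w : Fin p → V),
        Φ (wedgeOfFamily K (n - p) v) w
          = ω (fun i => Fin.append v w (Fin.cast (Nat.sub_add_cancel hp).symm i)))
    ∧
    -- … and any such map is a linear isomorphism
    (∀ Φ : ⋀[K]^(n - p) V →ₗ[K] (V [⋀^Fin p]→ₗ[K] K),
      (∀ (v : Fin (n - p) → V) (w : Fin p → V),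
        Φ (wedgeOfFamily K (n - p) v) w
          = ω (fun i => Fin.append v w (Fin.cast (Nat.sub_add_cancel hp).symm i))) →
      Function.Bijective Φ) := by
  have h : n - p + p = n := Nat.sub_add_cancel hp
  constructor
  · refine ⟨CVF.Phi ω h, fun v w => ?_⟩
    rw [CVF.Phi_wedge]
    rfl
  · intro Φ hΦ
    have hΦeq : Φ = CVF.Phi ω h := by
      apply LinearMap.ext_on (CVF.span_wedge_top (n - p))
      rintro _ ⟨v, rfl⟩
      apply AlternatingMap.ext
      intro w
      rw [hΦ v w, CVF.Phi_wedge]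
      rfl
    rw [hΦeq]
    exact ⟨CVF.Phi_injective hdim ω hω h, CVF.Phi_surjective hdim ω hω h⟩
end

section
/- Let n, m ≥ 1 and let Z = ℝⁿ × ℝᵐ × ℝ^{m·n} with coordinates (x^μ, y^a, p^μ_a), μ = 1, …, n, a = 1, …, m. Let H : Z → ℝ be smooth, let ω = dx¹ ∧ … ∧ dxⁿ, ω_μ = ∂_μ ⌟ ω, and let dΘ_PC be the alternating (n+1)-form-valued map on Z given by dΘ_PC = Σ_{a,μ} dp^μ_a ∧ dy^a ∧ ω_μ − dH ∧ ω (the exterior differential of the Hamiltonian Poincaré–Cartan n-form Θ_PC = Σ_{a,μ} p^μ_a dy^a ∧ ω_μ − H ω). Given smooth maps y : ℝⁿ → ℝᵐ and p : ℝⁿ → ℝ^{m·n}, let s(x) := (x, y(x), p(x)) and for each μ let X_μ(x) ∈ ℝ^{n+m+m·n} be the tangent lift of s along ∂_μ, i.e. the vector with x-component the μ-th standard basis vector, y-components ∂_μ y^a(x), and p-components ∂_μ p^ν_a(x). Then (y, p) satisfies the De Donder–Weyl Hamiltonian equations ∂_μ y^a(x) = ∂H/∂p^μ_a(s(x)) and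 Σ_μ ∂_μ p^μ_a(x) = −∂H/∂y^a(s(x)) for all a, μ and all x, if and only if for every x ∈ ℝⁿ and every u ∈ ℝ^{n+m+m·n}, dΘ_PC at the point s(x) satisfies dΘ_PC(X₁(x), …, X_n(x), u) = 0. -/
/-! STATEMENT 9: On the extended polymomentum phase space `Z = ℝⁿ × ℝᵐ × ℝ^{m·n}` with
coordinates `(x^μ, y^a, p^μ_a)`, the De Donder–Weyl Hamiltonian equations for a pair
`(y, p)` of fields hold iff the tangent lift `X₁ ∧ … ∧ X_n` of the section
`s(x) = (x, y(x), p(x))` annihilates the exterior differential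
`dΘ_PC = Σ_{a,μ} dp^μ_a ∧ dy^a ∧ ω_μ − dH ∧ ω` of the Hamiltonian Poincaré–Cartan form.

Here a wedge of 1-forms is evaluated as the determinant `(β₁∧…∧β_k)(u₁,…,u_k) = det[βᵢ(uⱼ)]`,
and `dp^μ_a ∧ dy^a ∧ ω_μ = ∂_μ ⌟ (dp^μ_a ∧ dy^a ∧ ω)`, so its value on `(u₁,…,u_{n+1})` is a
determinant with extra column `∂_μ` and rows `dp^μ_a, dy^a, dx¹, …, dxⁿ`. -/

/-- The extended polymomentum phase space `ℝⁿ × ℝᵐ × ℝ^{m·n}`, coordinates `(x, y, p)`. -/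
abbrev PolyPhase (n m : ℕ) : Type := (Fin n → ℝ) × (Fin m → ℝ) × (Fin m → Fin n → ℝ)




lemma neg_one_pow_mul_self (n : ℕ) : ((-1:ℝ)^n) * ((-1:ℝ)^n) = 1 := by
  rw [← pow_add]
  exact Even.neg_one_pow ⟨n, rfl⟩

open Matrix in
lemma detA {n : ℕ} (M : Matrix (Fin (n+1)) (Fin (n+1)) ℝ) (r : Fin (n+1) → ℝ) (c : Fin n → ℝ)
    (h0 : ∀ j, M 0 j = r j)
    (hrc : ∀ ν ρ : Fin n, M ν.succ ρ.castSucc = if ν = ρ then 1 else 0)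
    (hrl : ∀ ν : Fin n, M ν.succ (Fin.last n) = c ν) :
    M.det = (-1)^n * (r (Fin.last n) - ∑ ρ : Fin n, r ρ.castSucc * c ρ) := by
  have hperm : ((M.submatrix (finRotate (n+1)) id).det : ℝ)
      = ((Equiv.Perm.sign (finRotate (n+1)) : ℤ) : ℝ) * M.det := by
    rw [Matrix.det_permute]
  have e1 : ∀ i : Fin n, finRotate (n+1) (Fin.castAdd 1 i) = i.succ := by
    intro i
    rw [show (Fin.castAdd 1 i) = i.castSucc from rfl, finRotate_succ_apply]
    exact Fin.coeSucc_eq_succ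
  have e2 : ∀ j : Fin 1, (finSumFinEquiv (Sum.inr j) : Fin (n+1)) = Fin.last n := by
    intro j; simp [Fin.natAdd, Fin.last]
  have e3 : ∀ i : Fin 1, finRotate (n+1) (finSumFinEquiv (Sum.inr i)) = 0 := by
    intro i; rw [e2, finRotate_succ_apply, Fin.last_add_one]
  have hsub : ((M.submatrix (finRotate (n+1)) id).submatrix
      (finSumFinEquiv : Fin n ⊕ Fin 1 ≃ Fin (n+1)) finSumFinEquiv)
      = Matrix.fromBlocks (1 : Matrix (Fin n) (Fin n) ℝ)
          (Matrix.of fun ν _ => c ν) (Matrix.of fun _ ρ => r ρ.castSucc)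
            (Matrix.of fun _ _ => r (Fin.last n)) := by
    ext i j
    rcases i with i | i <;> rcases j with j | j <;>
      simp only [Matrix.submatrix_apply, id_eq, finSumFinEquiv_apply_left,
        Matrix.fromBlocks_apply₁₁, Matrix.fromBlocks_apply₁₂, Matrix.fromBlocks_apply₂₁,
        Matrix.fromBlocks_apply₂₂, Matrix.of_apply]
    · rw [e1, show (Fin.castAdd 1 j) = j.castSucc from rfl, hrc]
      simp [Matrix.one_apply]
    · rw [e1, e2, hrl]
    · rw [e3, show (Fin.castAdd 1 j) = j.castSucc from rfl, h0]
    · rw [e3, e2, h0]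
  have hdet2 : (M.submatrix (finRotate (n+1)) id).det
      = r (Fin.last n) - ∑ ρ : Fin n, r ρ.castSucc * c ρ := by
    rw [← Matrix.det_submatrix_equiv_self (finSumFinEquiv : Fin n ⊕ Fin 1 ≃ Fin (n+1)), hsub,
      Matrix.det_fromBlocks_one₁₁, Matrix.det_fin_one]
    simp [Matrix.mul_apply, Matrix.sub_apply]
  rw [hdet2, sign_finRotate] at hperm
  push_cast at hperm
  rw [hperm, ← mul_assoc, neg_one_pow_mul_self, one_mul]
open Matrix in
lemma detB {n : ℕ} (M : Matrix (Fin (n+2)) (Fin (n+2)) ℝ) (μ : Fin n)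
    (P A c : Fin n → ℝ) (q b : ℝ)
    (h00 : M 0 0 = 0) (h0c : ∀ ρ : Fin n, M 0 ρ.succ.castSucc = P ρ)
    (h0l : M 0 (Fin.last (n+1)) = q)
    (h10 : M 1 0 = 0) (h1c : ∀ ρ : Fin n, M 1 ρ.succ.castSucc = A ρ)
    (h1l : M 1 (Fin.last (n+1)) = b)
    (hr0 : ∀ ν : Fin n, M ν.succ.succ 0 = if ν = μ then 1 else 0)
    (hrc : ∀ ν ρ : Fin n, M ν.succ.succ ρ.succ.castSucc = if ν = ρ then 1 else 0)
    (hrl : ∀ ν : Fin n, M ν.succ.succ (Fin.last (n+1)) = c ν) :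
    M.det = (-1)^n * ((- P μ) * (b - ∑ ρ : Fin n, A ρ * c ρ)
      - (q - ∑ ρ : Fin n, P ρ * c ρ) * (- A μ)) := by
  set σ : Equiv.Perm (Fin (n+2)) := finRotate (n+2) * finRotate (n+2) with hσ
  set t : Fin (n+2) := ⟨n, by omega⟩ with ht
  set τ : Equiv.Perm (Fin (n+2)) := Fin.cycleRange t with hτ
  have step : ∀ w : Fin (n+1), finRotate (n+2) w.castSucc = w.succ := by
    intro w; rw [finRotate_succ_apply]; exact Fin.coeSucc_eq_succ
  have steplast : finRotate (n+2) (Fin.last (n+1)) = 0 := by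
    rw [finRotate_succ_apply, Fin.last_add_one]
  -- index computations
  have f1 : ∀ ν : Fin n, σ (Fin.castAdd 2 ν) = ν.succ.succ := by
    intro ν
    show finRotate (n+2) (finRotate (n+2) (Fin.castAdd 2 ν)) = ν.succ.succ
    rw [show (Fin.castAdd 2 ν) = ν.castSucc.castSucc from rfl, step, Fin.succ_castSucc, step]
  have hnat0 : (Fin.natAdd n (0 : Fin 2)) = (Fin.last n).castSucc := by
    apply Fin.ext; simp [Fin.last]
  have hnat1 : (Fin.natAdd n (1 : Fin 2)) = Fin.last (n+1) := by
    apply Fin.ext; simp [Fin.last]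
  have f2 : σ (Fin.natAdd n (0 : Fin 2)) = 0 := by
    show finRotate (n+2) (finRotate (n+2) (Fin.natAdd n (0 : Fin 2))) = 0
    rw [hnat0, step, show (Fin.last n).succ = Fin.last (n+1) from rfl, steplast]
  have f3 : σ (Fin.natAdd n (1 : Fin 2)) = 1 := by
    show finRotate (n+2) (finRotate (n+2) (Fin.natAdd n (1 : Fin 2))) = 1
    rw [hnat1, steplast, show (0 : Fin (n+2)) = ((0 : Fin (n+1))).castSucc from rfl, step]
    rfl
  have g1 : ∀ ρ : Fin n, τ (Fin.castAdd 2 ρ) = ρ.succ.castSucc := by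
    intro ρ
    rw [hτ, Fin.cycleRange_of_lt (by simp [ht, Fin.lt_def]),
      show (Fin.castAdd 2 ρ) = ρ.castSucc.castSucc from rfl,
      Fin.coeSucc_eq_succ, Fin.succ_castSucc]
  have g2 : τ (Fin.natAdd n (0 : Fin 2)) = 0 := by
    have h : (Fin.natAdd n (0 : Fin 2)) = t := by apply Fin.ext; simp [ht]
    rw [h, hτ, Fin.cycleRange_self]
  have g3 : τ (Fin.natAdd n (1 : Fin 2)) = Fin.last (n+1) := by
    rw [hnat1, hτ, Fin.cycleRange_of_gt (by simp [ht, Fin.lt_def, Fin.last])]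
  -- the block matrix
  have hsub : ((M.submatrix σ τ).submatrix
      (finSumFinEquiv : Fin n ⊕ Fin 2 ≃ Fin (n+2)) finSumFinEquiv)
      = Matrix.fromBlocks (1 : Matrix (Fin n) (Fin n) ℝ)
          (Matrix.of fun ν k => ![if ν = μ then (1:ℝ) else 0, c ν] k)
          (Matrix.of fun k ρ => ![P ρ, A ρ] k)
          (Matrix.of fun k l => ![![0, q], ![0, b]] k l) := by
    ext i j
    rcases i with i | i <;> rcases j with j | j <;>
      simp only [Matrix.submatrix_apply, finSumFinEquiv_apply_left, finSumFinEquiv_apply_right,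
        Matrix.fromBlocks_apply₁₁, Matrix.fromBlocks_apply₁₂, Matrix.fromBlocks_apply₂₁,
        Matrix.fromBlocks_apply₂₂]
    · rw [f1, g1, hrc]; simp [Matrix.one_apply]
    · fin_cases j <;> simp [f1, g2, g3, hrl, hr0]
    · have h0c' : ∀ ρ : Fin n, M 0 ρ.castSucc.succ = P ρ := h0c
      have h1c' : ∀ ρ : Fin n, M 1 ρ.castSucc.succ = A ρ := h1c
      fin_cases i <;> simp [f2, f3, g1, h0c', h1c']
    · fin_cases i <;> fin_cases j <;> simp [f2, f3, g2, g3, h00, h0l, h10, h1l]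
  have hdet2 : (M.submatrix σ τ).det
      = ((- P μ) * (b - ∑ ρ : Fin n, A ρ * c ρ)
        - (q - ∑ ρ : Fin n, P ρ * c ρ) * (- A μ)) := by
    rw [← Matrix.det_submatrix_equiv_self (finSumFinEquiv : Fin n ⊕ Fin 2 ≃ Fin (n+2)), hsub,
      Matrix.det_fromBlocks_one₁₁, Matrix.det_fin_two]
    simp only [Matrix.sub_apply, Matrix.mul_apply, Matrix.of_apply]
    simp [Finset.sum_ite_eq', mul_ite, mul_one, mul_zero]
  have s1 : ((Equiv.Perm.sign (finRotate (n+2)) : ℤ) : ℝ) = (-1)^(n+1) := by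
    rw [sign_finRotate]; push_cast; ring
  have s2 : ((Equiv.Perm.sign τ : ℤ) : ℝ) = (-1)^n := by
    rw [hτ, Fin.sign_cycleRange]
    push_cast
    norm_num [ht]
  have hperm : (M.submatrix σ τ).det = ((-1:ℝ))^n * M.det := by
    have e : M.submatrix σ τ = (M.submatrix id τ).submatrix σ id := rfl
    rw [e, Matrix.det_permute, Matrix.det_permute', hσ, _root_.map_mul]
    push_cast
    rw [s1, s2]
    rw [show ((-1:ℝ))^(n+1) * ((-1:ℝ))^(n+1) = 1 from neg_one_pow_mul_self (n+1)]
    ring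
  rw [hdet2] at hperm
  rw [hperm, ← mul_assoc, neg_one_pow_mul_self, one_mul]

lemma pi_single_sum {k : ℕ} (w : Fin k → ℝ) : ∑ ν : Fin k, w ν • (Pi.single ν 1 : Fin k → ℝ) = w := by
  funext j
  simp [Finset.sum_apply, Pi.single_apply]

lemma pi_single_sum2 {k l : ℕ} (w : Fin k → Fin l → ℝ) :
    ∑ a : Fin k, ∑ μ : Fin l, w a μ • (Pi.single a (Pi.single μ 1) : Fin k → Fin l → ℝ) = w := by
  funext j j2
  simp [Finset.sum_apply, Pi.single_apply, mul_ite, Finset.sum_ite_eq, Finset.sum_ite_eq',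
    apply_ite (fun g : Fin l → ℝ => g j2)]
lemma clm_expand {n m : ℕ} (L : PolyPhase n m →L[ℝ] ℝ) (v : PolyPhase n m) :
    L v = (∑ ν, v.1 ν * L ((Pi.single ν 1 : Fin n → ℝ), 0, 0))
      + (∑ a, v.2.1 a * L (0, (Pi.single a 1 : Fin m → ℝ), 0))
      + (∑ a, ∑ μ, v.2.2 a μ * L (0, 0, (Pi.single a (Pi.single μ 1) : Fin m → Fin n → ℝ))) := by
  have hsplit : v = ((v.1, 0, 0) : PolyPhase n m) + (0, v.2.1, 0) + (0, 0, v.2.2) := by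
    refine Prod.ext ?_ (Prod.ext ?_ ?_) <;> simp
  have h1 : ((v.1, 0, 0) : PolyPhase n m)
      = ∑ ν, v.1 ν • ((Pi.single ν 1 : Fin n → ℝ), (0 : Fin m → ℝ), (0 : Fin m → Fin n → ℝ)) := by
    refine Prod.ext ?_ (Prod.ext ?_ ?_) <;>
      simp [Prod.fst_sum, Prod.snd_sum, pi_single_sum, Prod.smul_mk]
  have h2 : ((0, v.2.1, 0) : PolyPhase n m)
      = ∑ a, v.2.1 a • ((0 : Fin n → ℝ), (Pi.single a 1 : Fin m → ℝ), (0 : Fin m → Fin n → ℝ)) := by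
    refine Prod.ext ?_ (Prod.ext ?_ ?_) <;>
      simp [Prod.fst_sum, Prod.snd_sum, pi_single_sum, Prod.smul_mk]
  have h3 : ((0, 0, v.2.2) : PolyPhase n m)
      = ∑ a, ∑ μ, v.2.2 a μ •
          ((0 : Fin n → ℝ), (0 : Fin m → ℝ), (Pi.single a (Pi.single μ 1) : Fin m → Fin n → ℝ)) := by
    refine Prod.ext ?_ (Prod.ext ?_ ?_) <;>
      simp [Prod.fst_sum, Prod.snd_sum, Prod.smul_mk, pi_single_sum2]
  conv_lhs => rw [hsplit, map_add, map_add, h1, h2, h3]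
  simp only [map_sum, map_smul, smul_eq_mul]

lemma keyAlgebra {n m : ℕ} (A : Fin m → Fin n → ℝ) (P : Fin m → Fin n → Fin n → ℝ)
    (Hx : Fin n → ℝ) (Hy : Fin m → ℝ) (Hp : Fin m → Fin n → ℝ)
    (c : Fin n → ℝ) (b : Fin m → ℝ) (q : Fin m → Fin n → ℝ)
    (SA : Fin m → ℝ) (SP : Fin m → Fin n → ℝ)
    (hSA : ∀ a, SA a = ∑ ν, A a ν * c ν) (hSP : ∀ a μ, SP a μ = ∑ ν, P a μ ν * c ν) :
    (∑ a, ∑ μ, (-1:ℝ)^n * ((-(P a μ μ)) * (b a - SA a) - (q a μ - SP a μ) * (-(A a μ))))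
     - (-1:ℝ)^n * ((∑ ν, c ν * Hx ν + ∑ a, b a * Hy a + ∑ a, ∑ μ, q a μ * Hp a μ)
        - ∑ ρ, (Hx ρ + ∑ a, A a ρ * Hy a + ∑ a, ∑ μ, P a μ ρ * Hp a μ) * c ρ)
    = (-1:ℝ)^(n+1) * ((∑ a, ∑ μ, (Hp a μ - A a μ) * (q a μ - SP a μ))
        + ∑ a, ((∑ μ, P a μ μ) + Hy a) * (b a - SA a)) := by
  have sw1 : ∑ ρ, (∑ a, A a ρ * Hy a) * c ρ = ∑ a, Hy a * SA a := by
    calc ∑ ρ, (∑ a, A a ρ * Hy a) * c ρ = ∑ ρ, ∑ a, A a ρ * Hy a * c ρ := by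
          simp [Finset.sum_mul]
      _ = ∑ a, ∑ ρ, A a ρ * Hy a * c ρ := Finset.sum_comm
      _ = ∑ a, Hy a * SA a := by
          simp only [hSA, Finset.mul_sum]
          exact Finset.sum_congr rfl fun a _ => Finset.sum_congr rfl fun ν _ => by ring
  have sw2 : ∑ ρ, (∑ a, ∑ μ, P a μ ρ * Hp a μ) * c ρ = ∑ a, ∑ μ, Hp a μ * SP a μ := by
    calc ∑ ρ, (∑ a, ∑ μ, P a μ ρ * Hp a μ) * c ρ
        = ∑ ρ, ∑ a, ∑ μ, P a μ ρ * Hp a μ * c ρ := by simp [Finset.sum_mul]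
      _ = ∑ a, ∑ ρ, ∑ μ, P a μ ρ * Hp a μ * c ρ := Finset.sum_comm
      _ = ∑ a, ∑ μ, ∑ ρ, P a μ ρ * Hp a μ * c ρ := Finset.sum_congr rfl fun a _ => Finset.sum_comm
      _ = ∑ a, ∑ μ, Hp a μ * SP a μ := by
          simp only [hSP, Finset.mul_sum]
          exact Finset.sum_congr rfl fun a _ => Finset.sum_congr rfl fun μ _ =>
            Finset.sum_congr rfl fun ν _ => by ring
  simp only [add_mul, Finset.sum_add_distrib]
  rw [sw1, sw2]
  simp only [pow_succ, mul_sub, sub_mul, mul_add, add_mul, neg_mul, mul_neg, neg_neg,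
    Finset.sum_sub_distrib, Finset.sum_add_distrib, Finset.mul_sum, Finset.sum_mul, mul_one]
  ring_nf
  simp only [Finset.sum_neg_distrib, Finset.sum_add_distrib, Finset.sum_sub_distrib,
    neg_add, neg_neg, neg_sub]
  ring_nf
  simp only [mul_comm, mul_left_comm, mul_assoc]
  ring_nf


theorem deDonderWeyl_iff_multivector_annihilates_dThetaPC
    (n m : ℕ) (hn : 1 ≤ n) (hm : 1 ≤ m)
    (H : PolyPhase n m → ℝ) (hH : ContDiff ℝ (⊤ : ℕ∞) H)
    -- dΘ_PC = Σ_{a,μ} dp^μ_a ∧ dy^a ∧ ω_μ − dH ∧ ω, as an alternating-(n+1)-form-valued map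
    (dΘPC : PolyPhase n m → (PolyPhase n m [⋀^Fin (n + 1)]→ₗ[ℝ] ℝ))
    (hdΘPC : ∀ (z : PolyPhase n m) (u : Fin (n + 1) → PolyPhase n m),
      dΘPC z u =
        (∑ a : Fin m, ∑ μ : Fin n,
          -- (dp^μ_a ∧ dy^a ∧ ω)(∂_μ, u₁, …, u_{n+1})
          Matrix.det (Matrix.of fun i j : Fin (n + 2) =>
            (Fin.cons (fun v : PolyPhase n m => v.2.2 a μ)
              (Fin.cons (fun v : PolyPhase n m => v.2.1 a)
                (fun ν : Fin n => fun v : PolyPhase n m => v.1 ν)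
                : Fin (n + 1) → PolyPhase n m → ℝ)
              : Fin (n + 2) → PolyPhase n m → ℝ) i
            ((Fin.cons (((Pi.single μ 1 : Fin n → ℝ), 0, 0) : PolyPhase n m) u
              : Fin (n + 2) → PolyPhase n m) j)))
        -
          -- (dH ∧ ω)(u₁, …, u_{n+1})
          Matrix.det (Matrix.of fun i j : Fin (n + 1) =>
            (Fin.cons (fun v : PolyPhase n m => fderiv ℝ H z v)
              (fun ν : Fin n => fun v : PolyPhase n m => v.1 ν)
              : Fin (n + 1) → PolyPhase n m → ℝ) i
            (u j)))
    (y : (Fin n → ℝ) → (Fin m → ℝ)) (hy : ContDiff ℝ (⊤ : ℕ∞) y)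
    (p : (Fin n → ℝ) → (Fin m → Fin n → ℝ)) (hp : ContDiff ℝ (⊤ : ℕ∞) p) :
    -- the De Donder–Weyl Hamiltonian equations for (y, p) …
    ((∀ (x : Fin n → ℝ) (a : Fin m) (μ : Fin n),
        fderiv ℝ y x (Pi.single μ 1) a
          = fderiv ℝ H (x, y x, p x) (0, 0, Pi.single a (Pi.single μ 1)))
      ∧ (∀ (x : Fin n → ℝ) (a : Fin m),
        (∑ μ, fderiv ℝ p x (Pi.single μ 1) a μ)
          = - fderiv ℝ H (x, y x, p x) (0, Pi.single a 1, 0)))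
    ↔
    -- … hold iff dΘ_PC(X₁(x), …, X_n(x), u) = 0 for the tangent lifts
    -- X_μ(x) = (e_μ, ∂_μ y(x), ∂_μ p(x)) of the section s(x) = (x, y(x), p(x))
    (∀ (x : Fin n → ℝ) (u : PolyPhase n m),
      dΘPC (x, y x, p x)
        (Fin.snoc
          (fun μ : Fin n =>
            (((Pi.single μ 1 : Fin n → ℝ),
              fderiv ℝ y x (Pi.single μ 1),
              fderiv ℝ p x (Pi.single μ 1)) : PolyPhase n m))
          u)
        = 0) := by
  -- the key pointwise formula
  have key : ∀ (x : Fin n → ℝ) (u : PolyPhase n m),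
      dΘPC (x, y x, p x)
        (Fin.snoc (fun μ : Fin n =>
          (((Pi.single μ 1 : Fin n → ℝ), fderiv ℝ y x (Pi.single μ 1),
            fderiv ℝ p x (Pi.single μ 1)) : PolyPhase n m)) u)
      = (-1:ℝ)^(n+1) *
          ((∑ a : Fin m, ∑ μ : Fin n,
              (fderiv ℝ H (x, y x, p x) (0, 0, Pi.single a (Pi.single μ 1))
                - fderiv ℝ y x (Pi.single μ 1) a)
              * (u.2.2 a μ - ∑ ν : Fin n, fderiv ℝ p x (Pi.single ν 1) a μ * u.1 ν))
            + ∑ a : Fin m,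
                ((∑ μ : Fin n, fderiv ℝ p x (Pi.single μ 1) a μ)
                  + fderiv ℝ H (x, y x, p x) (0, Pi.single a 1, 0))
                * (u.2.1 a - ∑ ν : Fin n, fderiv ℝ y x (Pi.single ν 1) a * u.1 ν)) := by
    intro x u
    set z : PolyPhase n m := (x, y x, p x) with hz
    set X : Fin n → PolyPhase n m := fun μ =>
      (((Pi.single μ 1 : Fin n → ℝ), fderiv ℝ y x (Pi.single μ 1),
        fderiv ℝ p x (Pi.single μ 1)) : PolyPhase n m) with hX
    set L : PolyPhase n m →L[ℝ] ℝ := fderiv ℝ H z with hL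
    rw [hdΘPC]
    -- evaluate the (n+2)×(n+2) determinants
    have hB : ∀ (a : Fin m) (μ : Fin n),
        Matrix.det (Matrix.of fun i j : Fin (n + 2) =>
            (Fin.cons (fun v : PolyPhase n m => v.2.2 a μ)
              (Fin.cons (fun v : PolyPhase n m => v.2.1 a)
                (fun ν : Fin n => fun v : PolyPhase n m => v.1 ν)
                : Fin (n + 1) → PolyPhase n m → ℝ)
              : Fin (n + 2) → PolyPhase n m → ℝ) i
            ((Fin.cons (((Pi.single μ 1 : Fin n → ℝ), 0, 0) : PolyPhase n m) (Fin.snoc X u)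
              : Fin (n + 2) → PolyPhase n m) j))
        = (-1:ℝ)^n * ((-(fderiv ℝ p x (Pi.single μ 1) a μ))
              * (u.2.1 a - ∑ ρ : Fin n, fderiv ℝ y x (Pi.single ρ 1) a * u.1 ρ)
            - (u.2.2 a μ - ∑ ρ : Fin n, fderiv ℝ p x (Pi.single ρ 1) a μ * u.1 ρ)
              * (-(fderiv ℝ y x (Pi.single μ 1) a))) := by
      intro a μ
      refine detB _ μ (fun ρ => fderiv ℝ p x (Pi.single ρ 1) a μ)
        (fun ρ => fderiv ℝ y x (Pi.single ρ 1) a) u.1 (u.2.2 a μ) (u.2.1 a)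
        ?_ ?_ ?_ ?_ ?_ ?_ ?_ ?_ ?_
      · simp
      · intro ρ
        simp only [Matrix.of_apply, Fin.cons_zero, ← Fin.succ_castSucc, Fin.cons_succ,
          Fin.snoc_castSucc]
        rfl
      · simp only [Matrix.of_apply, Fin.cons_zero, ← Fin.succ_last, Fin.cons_succ, Fin.snoc_last]
      · simp only [Matrix.of_apply, show (1 : Fin (n+2)) = (0 : Fin (n+1)).succ from rfl,
          Fin.cons_succ, Fin.cons_zero]
        rfl
      · intro ρ
        simp only [Matrix.of_apply, show (1 : Fin (n+2)) = (0 : Fin (n+1)).succ from rfl,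
          Fin.cons_succ, Fin.cons_zero, ← Fin.succ_castSucc, Fin.snoc_castSucc]
        rfl
      · simp only [Matrix.of_apply, show (1 : Fin (n+2)) = (0 : Fin (n+1)).succ from rfl,
          Fin.cons_succ, Fin.cons_zero, ← Fin.succ_last, Fin.snoc_last]
      · intro ν
        simp only [Matrix.of_apply, Fin.cons_succ, Fin.cons_zero]
        simp [Pi.single_apply]
      · intro ν ρ
        simp only [Matrix.of_apply, Fin.cons_succ, ← Fin.succ_castSucc, Fin.snoc_castSucc]
        simp [hX, Pi.single_apply]
      · intro ν
        simp only [Matrix.of_apply, Fin.cons_succ, ← Fin.succ_last, Fin.snoc_last]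
    have hA : Matrix.det (Matrix.of fun i j : Fin (n + 1) =>
            (Fin.cons (fun v : PolyPhase n m => fderiv ℝ H z v)
              (fun ν : Fin n => fun v : PolyPhase n m => v.1 ν)
              : Fin (n + 1) → PolyPhase n m → ℝ) i
            ((Fin.snoc X u : Fin (n+1) → PolyPhase n m) j))
        = (-1:ℝ)^n * (L u - ∑ ρ : Fin n, L (X ρ) * u.1 ρ) := by
      have := detA (Matrix.of fun i j : Fin (n + 1) =>
            (Fin.cons (fun v : PolyPhase n m => fderiv ℝ H z v)
              (fun ν : Fin n => fun v : PolyPhase n m => v.1 ν)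
              : Fin (n + 1) → PolyPhase n m → ℝ) i
            ((Fin.snoc X u : Fin (n+1) → PolyPhase n m) j))
        (fun j => L ((Fin.snoc X u : Fin (n+1) → PolyPhase n m) j)) u.1
        (by intro j; simp [hL])
        (by intro ν ρ; simp only [Matrix.of_apply, Fin.cons_succ, Fin.snoc_castSucc]
            simp [hX, Pi.single_apply])
        (by intro ν; simp only [Matrix.of_apply, Fin.cons_succ, Fin.snoc_last])
      rw [this]
      simp only [Fin.snoc_last, Fin.snoc_castSucc]
    rw [hA]
    simp only [hB]
    -- expand L u and L (X ρ)
    have hLu : L u = (∑ ν, u.1 ν * L ((Pi.single ν 1 : Fin n → ℝ), 0, 0))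
        + (∑ a, u.2.1 a * L (0, (Pi.single a 1 : Fin m → ℝ), 0))
        + (∑ a, ∑ μ, u.2.2 a μ * L (0, 0, (Pi.single a (Pi.single μ 1) : Fin m → Fin n → ℝ))) :=
      clm_expand L u
    have hLX : ∀ ρ : Fin n, L (X ρ) = L ((Pi.single ρ 1 : Fin n → ℝ), 0, 0)
        + (∑ a, fderiv ℝ y x (Pi.single ρ 1) a * L (0, (Pi.single a 1 : Fin m → ℝ), 0))
        + (∑ a, ∑ μ, fderiv ℝ p x (Pi.single ρ 1) a μ
            * L (0, 0, (Pi.single a (Pi.single μ 1) : Fin m → Fin n → ℝ))) := by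
      intro ρ
      rw [clm_expand L (X ρ)]
      congr 1
      congr 1
      simp [hX, Pi.single_apply, ite_mul, Finset.sum_ite_eq, Finset.sum_ite_eq']
    rw [hLu]
    simp only [hLX]
    exact keyAlgebra (fun a ν => fderiv ℝ y x (Pi.single ν 1) a)
      (fun a μ ν => fderiv ℝ p x (Pi.single ν 1) a μ)
      (fun ν => L ((Pi.single ν 1 : Fin n → ℝ), 0, 0))
      (fun a => L (0, (Pi.single a 1 : Fin m → ℝ), 0))
      (fun a μ => L (0, 0, (Pi.single a (Pi.single μ 1) : Fin m → Fin n → ℝ)))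
      u.1 u.2.1 u.2.2 _ _ (fun a => rfl) (fun a μ => rfl)
  constructor
  · rintro ⟨h1, h2⟩ x u
    rw [key x u]
    have z1 : (∑ a : Fin m, ∑ μ : Fin n,
        (fderiv ℝ H (x, y x, p x) (0, 0, Pi.single a (Pi.single μ 1))
          - fderiv ℝ y x (Pi.single μ 1) a)
        * (u.2.2 a μ - ∑ ν : Fin n, fderiv ℝ p x (Pi.single ν 1) a μ * u.1 ν)) = 0 :=
      Finset.sum_eq_zero fun a _ => Finset.sum_eq_zero fun μ _ => by
        rw [← h1 x a μ, sub_self, zero_mul]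
    have z2 : (∑ a : Fin m,
        ((∑ μ : Fin n, fderiv ℝ p x (Pi.single μ 1) a μ)
          + fderiv ℝ H (x, y x, p x) (0, Pi.single a 1, 0))
        * (u.2.1 a - ∑ ν : Fin n, fderiv ℝ y x (Pi.single ν 1) a * u.1 ν)) = 0 :=
      Finset.sum_eq_zero fun a _ => by rw [h2 x a, neg_add_cancel, zero_mul]
    rw [z1, z2, add_zero, mul_zero]
  · intro h
    have hne : ((-1:ℝ)^(n+1)) ≠ 0 := pow_ne_zero _ (by norm_num)
    constructor
    · intro x a μ
      have hk := (key x ((0, 0, Pi.single a (Pi.single μ 1)) : PolyPhase n m)).symm.trans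
        (h x ((0, 0, Pi.single a (Pi.single μ 1)) : PolyPhase n m))
      rw [mul_eq_zero] at hk
      rcases hk with hk | hk
      · exact absurd hk hne
      · have : (fderiv ℝ H (x, y x, p x) (0, 0, Pi.single a (Pi.single μ 1))
            - fderiv ℝ y x (Pi.single μ 1) a) = 0 := by
          have hsimp := hk
          simp only [Pi.zero_apply, mul_zero, Finset.sum_const_zero, sub_zero, zero_sub,
            Pi.single_apply] at hsimp
          simpa [Finset.sum_ite_eq, Finset.sum_ite_eq', mul_ite, ite_mul, ite_apply,
            Pi.single_apply] using hsimp
        linarith [this]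
    · intro x a
      have hk := (key x ((0, Pi.single a 1, 0) : PolyPhase n m)).symm.trans
        (h x ((0, Pi.single a 1, 0) : PolyPhase n m))
      rw [mul_eq_zero] at hk
      rcases hk with hk | hk
      · exact absurd hk hne
      · have : ((∑ μ : Fin n, fderiv ℝ p x (Pi.single μ 1) a μ)
            + fderiv ℝ H (x, y x, p x) (0, Pi.single a 1, 0)) = 0 := by
          have hsimp := hk
          simp only [Pi.zero_apply, mul_zero, Finset.sum_const_zero, sub_zero, zero_sub,
            Pi.single_apply] at hsimp
          simpa [Finset.sum_ite_eq, Finset.sum_ite_eq', mul_ite, ite_mul, ite_apply,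
            Pi.single_apply] using hsimp
        linarith [this]
end
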